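/- Let x ∈ ℝ^N be the concatenation of T ≥ 1 blocks x^(1), …, x^(T) with x^(t) ∈ ℝ^{B_t}. Then m(x) = max_{1≤t≤T} m(x^(t)), ℓ(x) = Σ_{t=1}^T e^{m(x^(t)) − m(x)} ℓ(x^(t)), and for any global index i whose position within its block t is i', softmax(x)_i = e^{m(x^(t)) − m(x)} f(x^(t))_{i'} / ℓ(x). -/
import Mathlib


/-- Softmax of a vector indexed by a finite type `ι`: `softmax(x)_i = e^{x_i} / Σ_j e^{x_j}`. -/
noncomputable def softmax {ι : Type*} [Fintype ι] (x : ι → ℝ) : ι → ℝ :=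
  fun i => Real.exp (x i) / ∑ j, Real.exp (x j)

/-- `m(x) := max_i x_i` (over a nonempty finite index type). -/
noncomputable def vmax {ι : Type*} [Fintype ι] (h : Nonempty ι) (x : ι → ℝ) : ℝ :=
  Finset.univ.sup' (Finset.univ_nonempty_iff.mpr h) x

/-- `f(x)_i := e^{x_i - m(x)}`. -/
noncomputable def fvec {ι : Type*} [Fintype ι] (h : Nonempty ι) (x : ι → ℝ) : ι → ℝ :=
  fun i => Real.exp (x i - vmax h x)

/-- `ℓ(x) := Σ_i f(x)_i`. -/
noncomputable def lsum {ι : Type*} [Fintype ι] (h : Nonempty ι) (x : ι → ℝ) : ℝ :=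
  ∑ i, fvec h x i

/-- The index type of the concatenation of `T` blocks of sizes `B t` is nonempty. -/
def neSigma {T : ℕ} (hT : 0 < T) {B : Fin T → ℕ} (hB : ∀ t, 0 < B t) :
    Nonempty ((t : Fin T) × Fin (B t)) :=
  ⟨⟨⟨0, hT⟩, ⟨0, hB ⟨0, hT⟩⟩⟩⟩

/-- `Fin n` is nonempty when `0 < n`. -/
def neFin {n : ℕ} (h : 0 < n) : Nonempty (Fin n) := ⟨⟨0, h⟩⟩

/-- Softmax decomposition for a concatenation of `T ≥ 1` blocks `x⁽¹⁾, …, x⁽ᵀ⁾` with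
`x⁽ᵗ⁾ ∈ ℝ^{B_t}`: `m(x) = max_t m(x⁽ᵗ⁾)`,
`ℓ(x) = Σ_t e^{m(x⁽ᵗ⁾) - m(x)} ℓ(x⁽ᵗ⁾)`, and for a global index lying in block `t` at
within-block position `i`, `softmax(x)_i = e^{m(x⁽ᵗ⁾) - m(x)} f(x⁽ᵗ⁾)_i / ℓ(x)`. -/
theorem softmax_multi_block_decomposition {T : ℕ} (hT : 0 < T) (B : Fin T → ℕ)
    (hB : ∀ t, 0 < B t) (x : (t : Fin T) → Fin (B t) → ℝ) :
    vmax (neSigma hT hB) (fun p : (t : Fin T) × Fin (B t) => x p.1 p.2) =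
      Finset.univ.sup' (Finset.univ_nonempty_iff.mpr (neFin hT))
        (fun t => vmax (neFin (hB t)) (x t)) ∧
    lsum (neSigma hT hB) (fun p : (t : Fin T) × Fin (B t) => x p.1 p.2) =
      ∑ t, Real.exp (vmax (neFin (hB t)) (x t) -
          vmax (neSigma hT hB) (fun p : (t : Fin T) × Fin (B t) => x p.1 p.2)) *
        lsum (neFin (hB t)) (x t) ∧
    ∀ t : Fin T, ∀ i : Fin (B t),
      softmax (fun p : (t : Fin T) × Fin (B t) => x p.1 p.2) ⟨t, i⟩ =
        Real.exp (vmax (neFin (hB t)) (x t) -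
            vmax (neSigma hT hB) (fun p : (t : Fin T) × Fin (B t) => x p.1 p.2)) *
          fvec (neFin (hB t)) (x t) i /
          lsum (neSigma hT hB) (fun p : (t : Fin T) × Fin (B t) => x p.1 p.2) := by
  set x' : ((t : Fin T) × Fin (B t)) → ℝ := fun p => x p.1 p.2 with hx'
  set M := vmax (neSigma hT hB) x' with hM
  have hmax : M = Finset.univ.sup' (Finset.univ_nonempty_iff.mpr (neFin hT))
      (fun t => vmax (neFin (hB t)) (x t)) := by
    apply le_antisymm
    · apply Finset.sup'_le
      intro p _
      exact le_trans (Finset.le_sup' (x p.1) (Finset.mem_univ p.2))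
        (Finset.le_sup' (fun t => vmax (neFin (hB t)) (x t)) (Finset.mem_univ p.1))
    · apply Finset.sup'_le
      intro t _
      apply Finset.sup'_le
      intro i _
      exact Finset.le_sup' x' (Finset.mem_univ ⟨t, i⟩)
  have hlsum : lsum (neSigma hT hB) x' =
      ∑ t, Real.exp (vmax (neFin (hB t)) (x t) - M) * lsum (neFin (hB t)) (x t) := by
    rw [lsum, ← Finset.univ_sigma_univ, Finset.sum_sigma]
    refine Finset.sum_congr rfl fun t _ => ?_
    rw [lsum, Finset.mul_sum]
    refine Finset.sum_congr rfl fun i _ => ?_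
    rw [fvec, fvec, ← Real.exp_add]
    congr 1
    ring
  refine ⟨hmax, hlsum, fun t i => ?_⟩
  have hS : (∑ p : (t : Fin T) × Fin (B t), Real.exp (x' p)) =
      Real.exp M * lsum (neSigma hT hB) x' := by
    rw [lsum, Finset.mul_sum]
    refine Finset.sum_congr rfl fun p _ => ?_
    rw [fvec, ← Real.exp_add]
    congr 1
    ring
  rw [softmax, hS, fvec, ← Real.exp_add]
  rw [show vmax (neFin (hB t)) (x t) - M + (x t i - vmax (neFin (hB t)) (x t))
      = x' ⟨t, i⟩ - M from by simp [hx']]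
  rw [Real.exp_sub, div_div]
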